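/- arXiv:2204.11560 — 4 statements merged into one kernel-verified Lean document; each statement's English description precedes it below -/
import Mathlib

section
/- The density power divergence converges to the Kullback–Leibler divergence as the tuning parameter tends to zero: if p, q ∈ ℝ^{L+1} are probability vectors (entries nonnegative, summing to 1) with q_j > 0 for all j, then lim_{β → 0⁺} d_β(p, q) = ∑_{j=1}^{L+1} p_j log(p_j/q_j), with the convention 0 · log 0 = 0. -/
open Finset Real Filter Topology

/-! Writing `p_j^(1+β) = p_j · p_j^β`, the `j`-th summand of `d_β(p, q)` becomes
`q_j^(1+β) - p_j q_j^β + p_j (p_j^β - q_j^β)/β`. The first two terms tend to `q_j - p_j` by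
continuity, and the difference quotient tends to `log p_j - log q_j`, the derivative of
`β ↦ p_j^β - q_j^β` at `0`. Summing, the terms `q_j - p_j` cancel because both vectors have total
mass `1`. -/

lemma tendsto_rpow_sub_rpow_div {a b : ℝ} (ha : 0 < a) (hb : 0 < b) :
    Tendsto (fun β : ℝ => (a ^ β - b ^ β) / β) (𝓝[≠] 0) (𝓝 (log a - log b)) := by
  have hderiv : HasDerivAt (fun β : ℝ => a ^ β - b ^ β) (log a - log b) 0 := by
    have h := (hasStrictDerivAt_const_rpow ha 0).hasDerivAt.sub
      (hasStrictDerivAt_const_rpow hb 0).hasDerivAt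
    simp only [rpow_zero, one_mul] at h
    exact h
  refine (hasDerivAt_iff_tendsto_slope.mp hderiv).congr fun β => ?_
  simp [slope_def_field, div_eq_inv_mul]

lemma density_power_term_eq {a b β : ℝ} (ha : 0 ≤ a) (hβ : 0 < β) :
    b ^ (1 + β) - (1 + 1 / β) * a * b ^ β + (1 / β) * a ^ (1 + β)
      = b ^ (1 + β) - a * b ^ β + a * ((a ^ β - b ^ β) / β) := by
  rw [rpow_add' ha (by linarith), rpow_one]
  field_simp
  ring

lemma tendsto_density_power_term {a b : ℝ} (ha : 0 ≤ a) (hb : 0 < b) :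
    Tendsto (fun β : ℝ => b ^ (1 + β) - (1 + 1 / β) * a * b ^ β + (1 / β) * a ^ (1 + β))
      (𝓝[>] 0) (𝓝 (b - a + a * log (a / b))) := by
  have hcont : Tendsto (fun β : ℝ => b ^ (1 + β) - a * b ^ β) (𝓝[>] 0) (𝓝 (b - a)) := by
    have hc : ContinuousAt (fun β : ℝ => b ^ (1 + β) - a * b ^ β) 0 := by
      fun_prop (disch := positivity)
    simpa using hc.tendsto.mono_left nhdsWithin_le_nhds
  have hquot : Tendsto (fun β : ℝ => a * ((a ^ β - b ^ β) / β)) (𝓝[>] 0)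
      (𝓝 (a * log (a / b))) := by
    rcases ha.eq_or_lt with rfl | ha
    · simp
    rw [log_div ha.ne' hb.ne']
    exact ((tendsto_rpow_sub_rpow_div ha hb).mono_left
      (nhdsWithin_mono _ fun β hβ => ne_of_gt hβ)).const_mul a
  refine (hcont.add hquot).congr' ?_
  filter_upwards [self_mem_nhdsWithin] with β hβ
  exact (density_power_term_eq ha hβ).symm

/-- The density power divergence `d_β(p, q)` converges to the Kullback–Leibler divergence
`∑ p_j log(p_j/q_j)` as the tuning parameter `β` tends to `0` from the right.
Powers with real exponents are real powers (`Real.rpow`), and `Real.log 0 = 0` gives the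
convention `0 · log 0 = 0` automatically. -/
theorem stmt7
    (L : ℕ) (p q : ℕ → ℝ)
    (hp : ∀ j, 1 ≤ j → j ≤ L + 1 → 0 ≤ p j)
    (hpsum : ∑ j ∈ Finset.Icc 1 (L + 1), p j = 1)
    (hq : ∀ j, 1 ≤ j → j ≤ L + 1 → 0 < q j)
    (hqsum : ∑ j ∈ Finset.Icc 1 (L + 1), q j = 1) :
    Tendsto
      (fun β : ℝ => ∑ j ∈ Finset.Icc 1 (L + 1),
        (q j ^ (1 + β) - (1 + 1 / β) * p j * q j ^ β + (1 / β) * p j ^ (1 + β)))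
      (nhdsWithin 0 (Set.Ioi 0))
      (nhds (∑ j ∈ Finset.Icc 1 (L + 1), p j * Real.log (p j / q j))) := by
  have hlim := tendsto_finsetSum (Finset.Icc 1 (L + 1)) fun j hj =>
    tendsto_density_power_term (hp j (mem_Icc.mp hj).1 (mem_Icc.mp hj).2)
      (hq j (mem_Icc.mp hj).1 (mem_Icc.mp hj).2)
  have hmass : ∑ j ∈ Finset.Icc 1 (L + 1), (q j - p j + p j * log (p j / q j))
      = ∑ j ∈ Finset.Icc 1 (L + 1), p j * log (p j / q j) := by
    rw [sum_add_distrib, sum_sub_distrib, hpsum, hqsum, sub_self, zero_add]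
  rwa [hmass] at hlim
end

section
/- Estimating equations for the minimum density power divergence estimator (Theorem 1): for every β > 0, every probability vector p̂ ∈ ℝ^{L+1}, and every θ in the interior of Θ = (0,∞) × ℝ, the map θ ↦ d_β(p̂, π(θ)) is differentiable with gradient (β + 1) W(θ)ᵀ D_{π(θ)}^{β−1} (π(θ) − p̂), where D_{π(θ)} is the diagonal matrix with diagonal entries π_j(θ); consequently every minimizer θ̂ lying in the interior of Θ satisfies W(θ̂)ᵀ D_{π(θ̂)}^{β−1} (p̂ − π(θ̂)) = 0. -/
open Real Finset

/-!
Write `Λⱼ(θ) = λ_{i(j)}(tⱼ + a_{i(j)−1} − τ_{i(j)−1})` for the cumulative hazard at the inspection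
time `tⱼ`, so that `G_T(tⱼ) = 1 − exp(−Λⱼ)`. It is linear in the rates `λₗ(θ) = θ₀ exp(θ₁ xₗ)`,
whose gradients are `λₗ (1/θ₀, xₗ)`; from this one reads off that `zⱼ` is the gradient of
`G_T(tⱼ)`, hence `wⱼ` is the gradient of `πⱼ`. As a function of time `Λ` is piecewise linear with
positive slopes and continuous at the stress-change times, so it increases strictly along the
inspection times and every cell probability is positive. There `y ↦ y^{1+β} − (1+1/β) p y^β` is
differentiable, and the chain rule gives the gradient; at an interior minimiser, a local minimum
on the open set `θ₀ > 0`, it vanishes.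
-/

section GradientCalculus

open InnerProductSpace

variable {F : Type*} [NormedAddCommGroup F] [InnerProductSpace ℝ F] [CompleteSpace F]
  {f g : F → ℝ} {f' g' x : F}

theorem HasGradientAt.add (hf : HasGradientAt f f' x) (hg : HasGradientAt g g' x) :
    HasGradientAt (fun y => f y + g y) (f' + g') x := by
  rw [hasGradientAt_iff_hasFDerivAt, map_add]
  exact hf.hasFDerivAt.add hg.hasFDerivAt

theorem HasGradientAt.sub (hf : HasGradientAt f f' x) (hg : HasGradientAt g g' x) :
    HasGradientAt (fun y => f y - g y) (f' - g') x := by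
  rw [hasGradientAt_iff_hasFDerivAt, map_sub]
  exact hf.hasFDerivAt.sub hg.hasFDerivAt

theorem HasGradientAt.const_sub (c : ℝ) (hf : HasGradientAt f f' x) :
    HasGradientAt (fun y => c - f y) (-f') x := by
  rw [hasGradientAt_iff_hasFDerivAt, map_neg]
  exact hf.hasFDerivAt.const_sub c

theorem HasDerivAt.comp_hasGradientAt {φ : ℝ → ℝ} {c : ℝ} (hφ : HasDerivAt φ c (f x))
    (hf : HasGradientAt f f' x) : HasGradientAt (fun y => φ (f y)) (c • f') x := by
  rw [hasGradientAt_iff_hasFDerivAt, map_smul]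
  exact hφ.comp_hasFDerivAt x hf.hasFDerivAt

theorem HasGradientAt.const_mul (c : ℝ) (hf : HasGradientAt f f' x) :
    HasGradientAt (fun y => c * f y) (c • f') x :=
  ((hasDerivAt_id (f x)).const_mul c |>.congr_deriv (mul_one c)).comp_hasGradientAt hf

theorem HasGradientAt.sum {ι : Type*} {s : Finset ι} {f : ι → F → ℝ} {f' : ι → F}
    (hf : ∀ i ∈ s, HasGradientAt (f i) (f' i) x) :
    HasGradientAt (fun y => ∑ i ∈ s, f i y) (∑ i ∈ s, f' i) x := by
  rw [hasGradientAt_iff_hasFDerivAt, map_sum]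
  exact HasFDerivAt.fun_sum fun i hi => (hf i hi).hasFDerivAt

theorem IsLocalMin.hasGradientAt_eq_zero (h : IsLocalMin f x) (hf : HasGradientAt f f' x) :
    f' = 0 :=
  (toDual ℝ F).map_eq_zero_iff.1 (h.hasFDerivAt_eq_zero hf.hasFDerivAt)

end GradientCalculus

section DensityPowerDivergence

variable {β : ℝ}

theorem hasDerivAt_dpd_term (hβ : β ≠ 0) (p : ℝ) {y : ℝ} (hy : 0 < y) :
    HasDerivAt (fun y => y ^ (1 + β) - (1 + 1 / β) * p * y ^ β + (1 / β) * p ^ (1 + β))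
      ((β + 1) * (y ^ (β - 1) * (y - p))) y := by
  have h := ((hasDerivAt_rpow_const (p := 1 + β) (Or.inl hy.ne')).sub
    ((hasDerivAt_rpow_const (p := β) (Or.inl hy.ne')).const_mul ((1 + 1 / β) * p))).add_const
    ((1 / β) * p ^ (1 + β))
  refine h.congr_deriv ?_
  rw [add_sub_cancel_left, rpow_sub_one hy.ne']
  field_simp
  ring

variable {F : Type*} [NormedAddCommGroup F] [InnerProductSpace ℝ F] [CompleteSpace F]
  {P : F → ℕ → ℝ} {w : ℕ → F} {p : ℕ → ℝ} {s : Finset ℕ} {θ : F}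

theorem hasGradientAt_dpd (hβ : β ≠ 0) (hP : ∀ j ∈ s, 0 < P θ j)
    (hw : ∀ j ∈ s, HasGradientAt (P · j) (w j) θ) :
    HasGradientAt (fun θ' => ∑ j ∈ s,
        (P θ' j ^ (1 + β) - (1 + 1 / β) * p j * P θ' j ^ β + (1 / β) * p j ^ (1 + β)))
      ((β + 1) • ∑ j ∈ s, (P θ j ^ (β - 1) * (P θ j - p j)) • w j) θ := by
  simp_rw [smul_sum, smul_smul]
  exact HasGradientAt.sum fun j hj =>
    (hasDerivAt_dpd_term hβ (p j) (hP j hj)).comp_hasGradientAt (f := (P · j)) (hw j hj)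

theorem dpd_estimating_equation (hβ : 0 < β) (hP : ∀ j ∈ s, 0 < P θ j)
    (hw : ∀ j ∈ s, HasGradientAt (P · j) (w j) θ)
    (hmin : IsLocalMin (fun θ' => ∑ j ∈ s,
        (P θ' j ^ (1 + β) - (1 + 1 / β) * p j * P θ' j ^ β + (1 / β) * p j ^ (1 + β))) θ) :
    ∑ j ∈ s, (P θ j ^ (β - 1) * (p j - P θ j)) • w j = 0 := by
  have h := hmin.hasGradientAt_eq_zero (hasGradientAt_dpd hβ.ne' hP hw)
  rw [smul_eq_zero, or_iff_right (by positivity)] at h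
  rw [← neg_eq_zero, ← h, ← sum_neg_distrib]
  refine sum_congr rfl fun j _ => ?_
  rw [← neg_smul, ← mul_neg, neg_sub]

end DensityPowerDivergence

section CellProbabilities

theorem cellProb_pos {L : ℕ} {g p H : ℕ → ℝ} (hG : ∀ j ≤ L, g j = 1 - exp (-H j))
    (hH : ∀ j, 1 ≤ j → j ≤ L → H (j - 1) < H j)
    (hP : ∀ j, 1 ≤ j → j ≤ L → p j = g j - g (j - 1))
    (hPend : p (L + 1) = 1 - g L) :
    ∀ j ∈ Icc 1 (L + 1), 0 < p j := by
  intro j hj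
  obtain ⟨hj1, hjL⟩ := mem_Icc.1 hj
  rcases hjL.lt_or_eq with hjL | rfl
  · rw [hP j hj1 (by omega), hG j (by omega), hG (j - 1) (by omega), sub_sub_sub_cancel_left,
      sub_pos, exp_lt_exp, neg_lt_neg_iff]
    exact hH j hj1 (by omega)
  · rw [hPend, hG L le_rfl, sub_sub_cancel]
    exact exp_pos _

variable {F : Type*} [NormedAddCommGroup F] [InnerProductSpace ℝ F] [CompleteSpace F]
  {L : ℕ} {G P : F → ℕ → ℝ} {θ : F}

theorem hasGradientAt_cellProb {z w : ℕ → F} (hG : ∀ j ≤ L, HasGradientAt (G · j) (z j) θ)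
    (hP : ∀ θ j, 1 ≤ j → j ≤ L → P θ j = G θ j - G θ (j - 1))
    (hPend : ∀ θ, P θ (L + 1) = 1 - G θ L) (hzend : z (L + 1) = 0)
    (hw : ∀ j, 1 ≤ j → j ≤ L + 1 → w j = z j - z (j - 1)) :
    ∀ j ∈ Icc 1 (L + 1), HasGradientAt (P · j) (w j) θ := by
  intro j hj
  obtain ⟨hj1, hjL⟩ := mem_Icc.1 hj
  rw [hw j hj1 hjL]
  rcases hjL.lt_or_eq with hjL | rfl
  · rw [show (P · j) = _ from funext fun θ' => hP θ' j hj1 (by omega)]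
    exact (hG j (by omega)).sub (hG (j - 1) (by omega))
  · rw [show (P · (L + 1)) = _ from funext hPend, hzend, Nat.add_sub_cancel, zero_sub]
    exact (hG L le_rfl).const_sub 1

end CellProbabilities

section CumulativeHazard

def cumHazard (τ r : ℕ → ℝ) (i : ℕ) (t : ℝ) : ℝ :=
  ∑ l ∈ Icc 1 (i - 1), (τ l - τ (l - 1)) * r l + r i * (t - τ (i - 1))

def InRegime (τ : ℕ → ℝ) (k i : ℕ) (t : ℝ) : Prop :=
  1 ≤ i ∧ i ≤ k ∧ τ (i - 1) ≤ t ∧ (i < k → t < τ i)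

variable {τ r : ℕ → ℝ} {k i i' : ℕ} {s t : ℝ}

theorem mul_add_div_sub_eq_cumHazard (hr : r i ≠ 0) :
    r i * (t + (∑ l ∈ Icc 1 (i - 1), (τ l - τ (l - 1)) * r l) / r i - τ (i - 1)) =
      cumHazard τ r i t := by
  unfold cumHazard
  field_simp
  ring

theorem cumHazard_mul_left (x : ℕ → ℝ) :
    cumHazard τ (fun l => x l * r l) i t =
      x i * cumHazard τ r i t + ∑ l ∈ Icc 1 (i - 1), r l * (τ l - τ (l - 1)) * (x l - x i) := by
  rw [cumHazard, cumHazard, mul_add, mul_sum, add_right_comm, ← sum_add_distrib]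
  congr 1
  · exact sum_congr rfl fun l _ => by ring
  · ring

theorem cumHazard_strictMono (hr : 0 < r i) : StrictMono (cumHazard τ r i) := fun s t hst => by
  unfold cumHazard
  gcongr

theorem cumHazard_succ_self (i : ℕ) : cumHazard τ r (i + 1) (τ i) = cumHazard τ r i (τ i) := by
  rcases i with _ | i
  · simp [cumHazard]
  · simp [cumHazard, sum_Icc_succ_top]
    ring

theorem cumHazard_le_of_lt (hr : ∀ l, 0 < r l) (hii' : i < i') (hτ : MonotoneOn τ (Set.Iio i'))
    (hs : s ≤ τ i) (ht : τ (i' - 1) ≤ t) : cumHazard τ r i s ≤ cumHazard τ r i' t := by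
  induction i', hii' using Nat.le_induction generalizing t with
  | base =>
    calc cumHazard τ r i s ≤ cumHazard τ r i (τ i) := (cumHazard_strictMono (hr i)).monotone hs
      _ = cumHazard τ r (i + 1) (τ i) := (cumHazard_succ_self i).symm
      _ ≤ cumHazard τ r (i + 1) t := (cumHazard_strictMono (hr _)).monotone (by simpa using ht)
  | succ n hn ih =>
    have hτn : τ (n - 1) ≤ τ n :=
      hτ (Set.mem_Iio.2 (by omega)) (Set.mem_Iio.2 (by omega)) (by omega)
    calc cumHazard τ r i s ≤ cumHazard τ r n (τ n) :=
          ih (hτ.mono (Set.Iio_subset_Iio (by omega))) hτn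
      _ = cumHazard τ r (n + 1) (τ n) := (cumHazard_succ_self n).symm
      _ ≤ cumHazard τ r (n + 1) t := (cumHazard_strictMono (hr _)).monotone (by simpa using ht)

theorem InRegime.index_le (hτ : MonotoneOn τ (Set.Iic (k - 1))) (hs : InRegime τ k i s)
    (ht : InRegime τ k i' t) (hst : s ≤ t) : i ≤ i' := by
  obtain ⟨-, hik, hs, -⟩ := hs
  obtain ⟨-, -, -, ht⟩ := ht
  by_contra! h
  have : τ i' ≤ τ (i - 1) :=
    hτ (Set.mem_Iic.2 (by omega)) (Set.mem_Iic.2 (by omega)) (by omega)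
  linarith [ht (by omega)]

theorem InRegime.eq_one (hτ : StrictMonoOn τ (Set.Iic (k - 1))) (h : InRegime τ k i (τ 0)) :
    i = 1 := by
  obtain ⟨hi, hik, h, -⟩ := h
  by_contra! h1
  have : τ 0 < τ (i - 1) := hτ (Set.mem_Iic.2 (by omega)) (Set.mem_Iic.2 (by omega)) (by omega)
  linarith

theorem cumHazard_lt_of_inRegime (hτ : StrictMonoOn τ (Set.Iic (k - 1))) (hr : ∀ l, 0 < r l)
    (hs : InRegime τ k i s) (ht : InRegime τ k i' t) (hst : s < t) :
    cumHazard τ r i s < cumHazard τ r i' t := by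
  rcases (hs.index_le hτ.monotoneOn ht hst.le).eq_or_lt with rfl | hlt
  · exact cumHazard_strictMono (hr i) hst
  · obtain ⟨-, -, -, hs⟩ := hs
    obtain ⟨-, hi'k, ht, -⟩ := ht
    have hτ' : MonotoneOn τ (Set.Iio i') :=
      hτ.monotoneOn.mono fun l hl => Set.mem_Iic.2 (by rw [Set.mem_Iio] at hl; omega)
    calc cumHazard τ r i s < cumHazard τ r i (τ i) := cumHazard_strictMono (hr i) (hs (by omega))
      _ ≤ cumHazard τ r i' t := cumHazard_le_of_lt hr hlt hτ' le_rfl ht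

end CumulativeHazard

theorem isOpen_setOf_zero_lt_apply {ι : Type*} [Fintype ι] (i : ι) :
    IsOpen {θ : EuclideanSpace ℝ ι | 0 < θ i} :=
  isOpen_lt continuous_const (by fun_prop)

local notation "ℝ²" => EuclideanSpace ℝ (Fin 2)

noncomputable section LogLinearModel

variable (τ x : ℕ → ℝ)

def rate (θ : ℝ²) (i : ℕ) : ℝ := θ 0 * exp (θ 1 * x i)

/-- The paper's `a_{i−1}(θ)`; `shiftStar τ x θ i` is its `a*_{i−1}(θ)`. -/
def shift (θ : ℝ²) (i : ℕ) : ℝ :=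
  (∑ l ∈ Icc 1 (i - 1), (τ l - τ (l - 1)) * rate x θ l) / rate x θ i

def shiftStar (θ : ℝ²) (i : ℕ) : ℝ :=
  (∑ l ∈ Icc 1 (i - 1), rate x θ l * (τ l - τ (l - 1)) * (x l - x i)) / rate x θ i

variable {τ x} {θ : ℝ²}

theorem rate_pos (hθ : 0 < θ 0) (i : ℕ) : 0 < rate x θ i := by
  unfold rate
  positivity

theorem rate_mul_eq_cumHazard (hθ : 0 < θ 0) (i : ℕ) (t : ℝ) :
    rate x θ i * (t + shift τ x θ i - τ (i - 1)) = cumHazard τ (rate x θ) i t :=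
  mul_add_div_sub_eq_cumHazard (rate_pos hθ i).ne'

theorem hasGradientAt_rate (hθ : θ 0 ≠ 0) (i : ℕ) :
    HasGradientAt (fun θ' => rate x θ' i) !₂[rate x θ i / θ 0, x i * rate x θ i] θ := by
  rw [hasGradientAt_iff_hasFDerivAt]
  refine ((PiLp.hasFDerivAt_apply 2 θ 0).mul
    ((PiLp.hasFDerivAt_apply 2 θ 1).mul_const (x i)).exp).congr_fderiv ?_
  ext v
  simp [rate, PiLp.inner_apply, Fin.sum_univ_two]
  field_simp
  ring

theorem hasGradientAt_cumHazard_rate (hθ : θ 0 ≠ 0) (i : ℕ) (t : ℝ) :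
    HasGradientAt (fun θ' => cumHazard τ (rate x θ') i t)
      !₂[cumHazard τ (rate x θ) i t / θ 0, cumHazard τ (fun l => x l * rate x θ l) i t] θ := by
  have h := (HasGradientAt.sum fun l (_ : l ∈ Icc 1 (i - 1)) =>
    (hasGradientAt_rate (x := x) hθ l).const_mul (τ l - τ (l - 1))).add
    ((hasGradientAt_rate (x := x) hθ i).const_mul (t - τ (i - 1)))
  convert h using 1
  · ext θ'
    simp only [cumHazard, mul_comm (rate x θ' i)]
  · ext j
    fin_cases j <;> simp [cumHazard, sum_div, add_div, mul_div_assoc] <;> ring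

theorem hasGradientAt_cumExposure (hθ : 0 < θ 0) (i : ℕ) (t : ℝ) :
    HasGradientAt (fun θ' => 1 - exp (-rate x θ' i * (t + shift τ x θ' i - τ (i - 1))))
      ((rate x θ i * exp (-rate x θ i * (t + shift τ x θ i - τ (i - 1)))) •
        (WithLp.equiv 2 (Fin 2 → ℝ)).symm ![(t + shift τ x θ i - τ (i - 1)) / θ 0,
          (t + shift τ x θ i - τ (i - 1)) * x i + shiftStar τ x θ i]) θ := by
  have hstar : rate x θ i * shiftStar τ x θ i =
      ∑ l ∈ Icc 1 (i - 1), rate x θ l * (τ l - τ (l - 1)) * (x l - x i) :=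
    mul_div_cancel₀ _ (rate_pos hθ i).ne'
  have hφ (H : ℝ) : HasDerivAt (fun h => 1 - exp (-h)) (exp (-H)) H := by
    simpa using ((hasDerivAt_neg H).exp).const_sub 1
  have h := (hφ _).comp_hasGradientAt
    (hasGradientAt_cumHazard_rate (τ := τ) (x := x) hθ.ne' i t)
  convert h.congr_of_eventuallyEq ?_ using 1
  · rw [neg_mul, cumHazard_mul_left, ← rate_mul_eq_cumHazard hθ, ← hstar]
    ext j
    fin_cases j <;> simp <;> ring
  · filter_upwards [(isOpen_setOf_zero_lt_apply 0).mem_nhds hθ] with θ' hθ'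
    rw [neg_mul, rate_mul_eq_cumHazard hθ']

end LogLinearModel

theorem stmt8_general
    (k L : ℕ) (x τ tt : ℕ → ℝ) (I : ℕ → ℕ) (β : ℝ) (phat : ℕ → ℝ)
    (lam a astar : EuclideanSpace ℝ (Fin 2) → ℕ → ℝ)
    (GT gT : EuclideanSpace ℝ (Fin 2) → ℕ → ℝ)
    (piv : EuclideanSpace ℝ (Fin 2) → ℕ → ℝ)
    (z w : EuclideanSpace ℝ (Fin 2) → ℕ → EuclideanSpace ℝ (Fin 2))
    (hβ : 0 < β)
    (hτ0 : τ 0 = 0)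
    (hτmono : ∀ i, i + 1 ≤ k - 1 → τ i < τ (i + 1))
    (ht0 : tt 0 = 0)
    (htmono : ∀ j, j + 1 ≤ L → tt j < tt (j + 1))
    (hreg : ∀ j, j ≤ L →
      1 ≤ I j ∧ I j ≤ k ∧ τ (I j - 1) ≤ tt j ∧ (I j < k → tt j < τ (I j)))
    (hlam : ∀ θ : EuclideanSpace ℝ (Fin 2), ∀ i, lam θ i = θ 0 * Real.exp (θ 1 * x i))
    (ha : ∀ θ : EuclideanSpace ℝ (Fin 2), ∀ i,
      a θ i = (∑ l ∈ Finset.Icc 1 (i - 1), (τ l - τ (l - 1)) * lam θ l) / lam θ i)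
    (hastar : ∀ θ : EuclideanSpace ℝ (Fin 2), ∀ i,
      astar θ i = (∑ l ∈ Finset.Icc 1 (i - 1), lam θ l * (τ l - τ (l - 1)) * (x l - x i))
        / lam θ i)
    (hGT : ∀ θ : EuclideanSpace ℝ (Fin 2), ∀ j, j ≤ L →
      GT θ j = 1 - Real.exp (-(lam θ (I j)) * (tt j + a θ (I j) - τ (I j - 1))))
    (hgT : ∀ θ : EuclideanSpace ℝ (Fin 2), ∀ j, j ≤ L →
      gT θ j = lam θ (I j) * Real.exp (-(lam θ (I j)) * (tt j + a θ (I j) - τ (I j - 1))))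
    (hpiv : ∀ θ : EuclideanSpace ℝ (Fin 2), ∀ j, 1 ≤ j → j ≤ L →
      piv θ j = GT θ j - GT θ (j - 1))
    (hpivend : ∀ θ : EuclideanSpace ℝ (Fin 2), piv θ (L + 1) = 1 - GT θ L)
    (hz0 : ∀ θ : EuclideanSpace ℝ (Fin 2), z θ 0 = 0)
    (hzend : ∀ θ : EuclideanSpace ℝ (Fin 2), z θ (L + 1) = 0)
    (hz : ∀ θ : EuclideanSpace ℝ (Fin 2), ∀ j, 1 ≤ j → j ≤ L →
      z θ j = gT θ j • (WithLp.equiv 2 (Fin 2 → ℝ)).symm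
        ![(tt j + a θ (I j) - τ (I j - 1)) / θ 0,
          (tt j + a θ (I j) - τ (I j - 1)) * x (I j) + astar θ (I j)])
    (hw : ∀ θ : EuclideanSpace ℝ (Fin 2), ∀ j, 1 ≤ j → j ≤ L + 1 →
      w θ j = z θ j - z θ (j - 1)) :
    (∀ θ : EuclideanSpace ℝ (Fin 2), 0 < θ 0 →
      HasGradientAt
        (fun θ' : EuclideanSpace ℝ (Fin 2) => ∑ j ∈ Finset.Icc 1 (L + 1),
          (piv θ' j ^ (1 + β) - (1 + 1 / β) * phat j * piv θ' j ^ β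
            + (1 / β) * phat j ^ (1 + β)))
        ((β + 1) • ∑ j ∈ Finset.Icc 1 (L + 1),
          (piv θ j ^ (β - 1) * (piv θ j - phat j)) • w θ j) θ)
    ∧
    (∀ θhat : EuclideanSpace ℝ (Fin 2), 0 < θhat 0 →
      (∀ θ' : EuclideanSpace ℝ (Fin 2), 0 < θ' 0 →
        (∑ j ∈ Finset.Icc 1 (L + 1),
          (piv θhat j ^ (1 + β) - (1 + 1 / β) * phat j * piv θhat j ^ β
            + (1 / β) * phat j ^ (1 + β))) ≤
        ∑ j ∈ Finset.Icc 1 (L + 1),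
          (piv θ' j ^ (1 + β) - (1 + 1 / β) * phat j * piv θ' j ^ β
            + (1 / β) * phat j ^ (1 + β))) →
      ∑ j ∈ Finset.Icc 1 (L + 1),
        (piv θhat j ^ (β - 1) * (phat j - piv θhat j)) • w θhat j = 0) := by
  obtain rfl : lam = rate x := funext fun θ => funext (hlam θ)
  obtain rfl : a = shift τ x := funext fun θ => funext (ha θ)
  obtain rfl : astar = shiftStar τ x := funext fun θ => funext (hastar θ)
  have hτ : StrictMonoOn τ (Set.Iic (k - 1)) :=
    strictMonoOn_Iic_of_lt_succ fun m hm => hτmono m (by omega)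
  have hI0 : I 0 = 1 :=
    InRegime.eq_one hτ (by rw [hτ0, ← ht0]; exact hreg 0 L.zero_le)
  have hGTgrad (θ : ℝ²) (hθ : 0 < θ 0) : ∀ j ≤ L, HasGradientAt (GT · j) (z θ j) θ := by
    intro j hj
    rcases j.eq_zero_or_pos with rfl | hj1
    · rw [show (GT · 0) = fun _ => 0 from funext fun θ' => by
        simp [hGT θ' 0 L.zero_le, hI0, ht0, hτ0, shift], hz0]
      exact hasGradientAt_const θ 0
    · rw [show (GT · j) = _ from funext fun θ' => hGT θ' j hj, hz θ j hj1 hj, hgT θ j hj]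
      exact hasGradientAt_cumExposure hθ (I j) (tt j)
  have hpos (θ : ℝ²) (hθ : 0 < θ 0) : ∀ j ∈ Icc 1 (L + 1), 0 < piv θ j := by
    refine cellProb_pos (H := fun j => cumHazard τ (rate x θ) (I j) (tt j)) (fun j hj => ?_)
      (fun j hj1 hjL => ?_) (hpiv θ) (hpivend θ)
    · rw [hGT θ j hj, neg_mul, rate_mul_eq_cumHazard hθ]
    · refine cumHazard_lt_of_inRegime hτ (rate_pos hθ) (hreg _ (by omega)) (hreg j hjL) ?_
      simpa [Nat.sub_add_cancel hj1] using htmono (j - 1) (by omega)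
  have hgrad (θ : ℝ²) (hθ : 0 < θ 0) :=
    hasGradientAt_cellProb (hGTgrad θ hθ) hpiv hpivend (hzend θ) (hw θ)
  refine ⟨fun θ hθ => hasGradientAt_dpd hβ.ne' (hpos θ hθ) (hgrad θ hθ),
    fun θhat hθhat hmin => dpd_estimating_equation hβ (hpos θhat hθhat) (hgrad θhat hθhat) ?_⟩
  filter_upwards [(isOpen_setOf_zero_lt_apply 0).mem_nhds hθhat] with θ' hθ' using hmin θ' hθ'

/-- Estimating equations for the minimum density power divergence estimator (Theorem 1 of the
paper): for every `β > 0`, every probability vector `phat`, and every `θ` in the interior of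
`Θ = (0,∞) × ℝ` (represented as `EuclideanSpace ℝ (Fin 2)`), the DPD objective
`θ ↦ d_β(phat, π(θ))` is differentiable with gradient
`(β+1) W(θ)ᵀ D_{π(θ)}^{β−1} (π(θ) − phat) = (β+1) ∑_j π_j(θ)^{β−1}(π_j(θ) − phat_j) w_j(θ)`,
and consequently every interior minimizer `θ̂` satisfies
`W(θ̂)ᵀ D_{π(θ̂)}^{β−1} (phat − π(θ̂)) = 0`.
Here `a θ i`, `astar θ i` denote the paper's `a_{i−1}(θ)`, `a*_{i−1}(θ)`; `I j` is the regime
index of the inspection time `tt j`; powers with real exponents are `Real.rpow`. -/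
theorem stmt8
    (k L : ℕ) (x τ tt : ℕ → ℝ) (I : ℕ → ℕ) (β : ℝ) (phat : ℕ → ℝ)
    (lam a astar : EuclideanSpace ℝ (Fin 2) → ℕ → ℝ)
    (GT gT : EuclideanSpace ℝ (Fin 2) → ℕ → ℝ)
    (piv : EuclideanSpace ℝ (Fin 2) → ℕ → ℝ)
    (z w : EuclideanSpace ℝ (Fin 2) → ℕ → EuclideanSpace ℝ (Fin 2))
    (hk : 1 ≤ k) (hL : 1 ≤ L) (hβ : 0 < β)
    (hx : ∀ i, 1 ≤ i → i + 1 ≤ k → x i < x (i + 1))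
    (hτ0 : τ 0 = 0)
    (hτmono : ∀ i, i + 1 ≤ k - 1 → τ i < τ (i + 1))
    (ht0 : tt 0 = 0)
    (htmono : ∀ j, j + 1 ≤ L → tt j < tt (j + 1))
    (hchange : ∀ i, 1 ≤ i → i ≤ k - 1 → ∃ j, 1 ≤ j ∧ j ≤ L ∧ tt j = τ i)
    (hreg : ∀ j, j ≤ L →
      1 ≤ I j ∧ I j ≤ k ∧ τ (I j - 1) ≤ tt j ∧ (I j < k → tt j < τ (I j)))
    (hphat : ∀ j, 1 ≤ j → j ≤ L + 1 → 0 ≤ phat j)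
    (hphatsum : ∑ j ∈ Finset.Icc 1 (L + 1), phat j = 1)
    (hlam : ∀ θ : EuclideanSpace ℝ (Fin 2), ∀ i, lam θ i = θ 0 * Real.exp (θ 1 * x i))
    (ha : ∀ θ : EuclideanSpace ℝ (Fin 2), ∀ i,
      a θ i = (∑ l ∈ Finset.Icc 1 (i - 1), (τ l - τ (l - 1)) * lam θ l) / lam θ i)
    (hastar : ∀ θ : EuclideanSpace ℝ (Fin 2), ∀ i,
      astar θ i = (∑ l ∈ Finset.Icc 1 (i - 1), lam θ l * (τ l - τ (l - 1)) * (x l - x i))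
        / lam θ i)
    (hGT : ∀ θ : EuclideanSpace ℝ (Fin 2), ∀ j, j ≤ L →
      GT θ j = 1 - Real.exp (-(lam θ (I j)) * (tt j + a θ (I j) - τ (I j - 1))))
    (hgT : ∀ θ : EuclideanSpace ℝ (Fin 2), ∀ j, j ≤ L →
      gT θ j = lam θ (I j) * Real.exp (-(lam θ (I j)) * (tt j + a θ (I j) - τ (I j - 1))))
    (hpiv : ∀ θ : EuclideanSpace ℝ (Fin 2), ∀ j, 1 ≤ j → j ≤ L →
      piv θ j = GT θ j - GT θ (j - 1))
    (hpivend : ∀ θ : EuclideanSpace ℝ (Fin 2), piv θ (L + 1) = 1 - GT θ L)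
    (hz0 : ∀ θ : EuclideanSpace ℝ (Fin 2), z θ 0 = 0)
    (hzend : ∀ θ : EuclideanSpace ℝ (Fin 2), z θ (L + 1) = 0)
    (hz : ∀ θ : EuclideanSpace ℝ (Fin 2), ∀ j, 1 ≤ j → j ≤ L →
      z θ j = gT θ j • (WithLp.equiv 2 (Fin 2 → ℝ)).symm
        ![(tt j + a θ (I j) - τ (I j - 1)) / θ 0,
          (tt j + a θ (I j) - τ (I j - 1)) * x (I j) + astar θ (I j)])
    (hw : ∀ θ : EuclideanSpace ℝ (Fin 2), ∀ j, 1 ≤ j → j ≤ L + 1 →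
      w θ j = z θ j - z θ (j - 1)) :
    (∀ θ : EuclideanSpace ℝ (Fin 2), 0 < θ 0 →
      HasGradientAt
        (fun θ' : EuclideanSpace ℝ (Fin 2) => ∑ j ∈ Finset.Icc 1 (L + 1),
          (piv θ' j ^ (1 + β) - (1 + 1 / β) * phat j * piv θ' j ^ β
            + (1 / β) * phat j ^ (1 + β)))
        ((β + 1) • ∑ j ∈ Finset.Icc 1 (L + 1),
          (piv θ j ^ (β - 1) * (piv θ j - phat j)) • w θ j) θ)
    ∧
    (∀ θhat : EuclideanSpace ℝ (Fin 2), 0 < θhat 0 →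
      (∀ θ' : EuclideanSpace ℝ (Fin 2), 0 < θ' 0 →
        (∑ j ∈ Finset.Icc 1 (L + 1),
          (piv θhat j ^ (1 + β) - (1 + 1 / β) * phat j * piv θhat j ^ β
            + (1 / β) * phat j ^ (1 + β))) ≤
        ∑ j ∈ Finset.Icc 1 (L + 1),
          (piv θ' j ^ (1 + β) - (1 + 1 / β) * phat j * piv θ' j ^ β
            + (1 / β) * phat j ^ (1 + β))) →
      ∑ j ∈ Finset.Icc 1 (L + 1),
        (piv θhat j ^ (β - 1) * (phat j - piv θhat j)) • w θhat j = 0) :=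
  stmt8_general k L x τ tt I β phat lam a astar GT gT piv z w hβ hτ0 hτmono ht0 htmono hreg hlam ha
    hastar hGT hgT hpiv hpivend hz0 hzend hz hw
end

section
/- Influence function of the MDPDE (Result 5): fix β > 0, θ₀ in the interior of Θ = (0,∞) × ℝ with J_β(θ₀) invertible, and a cell index n₀ ∈ {1, …, L+1}; let Δ ∈ ℝ^{L+1} be the indicator vector of cell n₀ and g_ε = (1−ε) π(θ₀) + ε Δ. Suppose θ : (−δ, δ) → Θ is differentiable at 0 with θ(0) = θ₀, the map (ε, θ) ↦ ∑_{j=1}^{L+1} π_j(θ)^{β−1} (π_j(θ) − g_{ε,j}) ∇_θ π_j(θ) is such that ∑_{j=1}^{L+1} π_j(θ(ε))^{β−1} (π_j(θ(ε)) − g_{ε,j}) ∇_θ π_j(θ(ε)) = 0 for all ε ∈ (−δ, δ), and θ ↦ π(θ) is twice continuously differentiable near θ₀. Then θ′(0) = J_β(θ₀)⁻¹ W(θ₀)ᵀ D_{π(θ₀)}^{β−1} (Δ − π(θ₀)). -/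
/-
The influence function is obtained by differentiating the estimating equation along the curve
`ε ↦ θ(ε)` at `ε = 0`. In each summand `π_j(θ)^{β-1} (π_j(θ) - g_{ε,j}) ∇π_j(θ)` the middle
factor vanishes at `ε = 0`, so the product rule only needs the outer factors to be continuous
there and the derivative is `π_j^{β-1} (⟪∇π_j, θ'(0)⟫ + π_j - Δ_j) ∇π_j`. Summing gives
`J_β(θ₀) θ'(0) = W(θ₀)ᵀ D^{β-1} (Δ - π(θ₀))`, which is solved with `J_β(θ₀)⁻¹`.
Continuity of `π_j^{β-1}` for `β < 1` needs `π_j(θ₀) > 0`, which holds because the cumulative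
exposure is strictly increasing across the inspection times; continuity of `∇π_j` comes from
`π_j` being `C²`.
-/

open Real Finset Filter
open scoped RealInnerProductSpace Topology Matrix

theorem HasDerivAt.smul_of_eq_zero {𝕜 F : Type*} [NontriviallyNormedField 𝕜]
    [NormedAddCommGroup F] [NormedSpace 𝕜 F] {h : 𝕜 → 𝕜} {f : 𝕜 → F} {d x : 𝕜}
    (hh : HasDerivAt h d x) (hx : h x = 0) (hf : ContinuousAt f x) :
    HasDerivAt (fun y => h y • f y) (d • f x) x := by
  rw [hasDerivAt_iff_tendsto_slope] at hh ⊢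
  refine (hh.smul (hf.tendsto.mono_left nhdsWithin_le_nhds)).congr fun y => ?_
  simp only [slope_def_module, hx, zero_smul, sub_zero, smul_smul, smul_eq_mul]

section Gradient

variable {E : Type*} [NormedAddCommGroup E] [InnerProductSpace ℝ E] [CompleteSpace E]

theorem ContDiffAt.continuousAt_gradient {f : E → ℝ} {x : E} {n : WithTop ℕ∞}
    (hf : ContDiffAt ℝ n f x) (hn : n ≠ 0) : ContinuousAt (gradient f) x :=
  (InnerProductSpace.toDual ℝ E).symm.continuous.continuousAt.comp (hf.continuousAt_fderiv hn)

theorem ContDiffAt.continuousAt_of_eventually_hasGradientAt {f : E → ℝ} {γ g : ℝ → E} {t : ℝ}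
    (hf : ContDiffAt ℝ 1 f (γ t)) (hγ : ContinuousAt γ t)
    (hg : ∀ᶠ s in 𝓝 t, HasGradientAt f (g s) (γ s)) : ContinuousAt g t := by
  have hcomp : ContinuousAt (fun s => gradient f (γ s)) t :=
    (hf.continuousAt_gradient one_ne_zero).comp hγ
  exact hcomp.congr_of_eventuallyEq (hg.mono fun s hs => hs.gradient.symm)

theorem HasGradientAt.hasDerivAt_comp {f : E → ℝ} {f' : E} {γ : ℝ → E} {u : E} {t : ℝ}
    (hf : HasGradientAt f f' (γ t)) (hγ : HasDerivAt γ u t) :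
    HasDerivAt (fun s => f (γ s)) ⟪f', u⟫ t := by
  simpa [Function.comp_def] using hf.hasFDerivAt.comp_hasDerivAt t hγ

end Gradient

section EstimatingEquation

variable {E : Type*} [NormedAddCommGroup E] [InnerProductSpace ℝ E] {β : ℝ}

theorem hasDerivAt_dpdScore_term {p : ℝ → ℝ} {w : ℝ → E} {p' Δ : ℝ}
    (hp : HasDerivAt p p' 0) (hp0 : 0 < p 0) (hw : ContinuousAt w 0) :
    HasDerivAt (fun ε => (p ε ^ (β - 1) * (p ε - ((1 - ε) * p 0 + ε * Δ))) • w ε)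
      ((p 0 ^ (β - 1) * (p' + p 0 - Δ)) • w 0) 0 := by
  have hres : HasDerivAt (fun ε => p ε - ((1 - ε) * p 0 + ε * Δ)) (p' + p 0 - Δ) 0 := by
    have hmix : HasDerivAt (fun ε : ℝ => (1 - ε) * p 0 + ε * Δ) (-p 0 + Δ) 0 := by
      simpa using (((hasDerivAt_id (0 : ℝ)).const_sub 1).mul_const (p 0)).fun_add
        ((hasDerivAt_id (0 : ℝ)).mul_const Δ)
    exact (hp.sub hmix).congr_deriv (by ring)
  have hweight : ContinuousAt (fun ε => p ε ^ (β - 1) • w ε) 0 :=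
    (hp.continuousAt.rpow_const (Or.inl hp0.ne')).smul hw
  convert hres.smul_of_eq_zero (by simp) hweight using 1
  · ext ε
    rw [mul_comm, mul_smul]
  · rw [mul_comm, mul_smul]

theorem linearized_estimatingEquation [CompleteSpace E] {ι : Type*} (s : Finset ι) (Δ : ι → ℝ)
    (piv : E → ι → ℝ) (gradpi : E → ι → E) {θc : ℝ → E} {u : E}
    (hθc : HasDerivAt θc u 0) (hpos : ∀ j ∈ s, 0 < piv (θc 0) j)
    (hgrad : ∀ j ∈ s, HasGradientAt (piv · j) (gradpi (θc 0) j) (θc 0))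
    (hcont : ∀ j ∈ s, ContinuousAt (fun ε => gradpi (θc ε) j) 0)
    (hest : ∀ᶠ ε in 𝓝 0, ∑ j ∈ s, (piv (θc ε) j ^ (β - 1) *
      (piv (θc ε) j - ((1 - ε) * piv (θc 0) j + ε * Δ j))) • gradpi (θc ε) j = 0) :
    ∑ j ∈ s, (piv (θc 0) j ^ (β - 1) * ⟪gradpi (θc 0) j, u⟫) • gradpi (θc 0) j =
      ∑ j ∈ s, (piv (θc 0) j ^ (β - 1) * (Δ j - piv (θc 0) j)) • gradpi (θc 0) j := by
  have hderiv := HasDerivAt.fun_sum fun j hj =>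
    hasDerivAt_dpdScore_term (β := β) (Δ := Δ j) ((hgrad j hj).hasDerivAt_comp hθc) (hpos j hj)
      (hcont j hj)
  have hzero := (hderiv.congr_of_eventuallyEq (hest.mono fun _ h => h.symm)).unique
    (hasDerivAt_const 0 0)
  rw [← sub_eq_zero, ← sum_sub_distrib, ← hzero]
  refine sum_congr rfl fun j _ => ?_
  rw [← sub_smul]
  congr 1
  ring

theorem Matrix.sum_smul_vecMulVec_mulVec {ι n : Type*} [Fintype n] (s : Finset ι) (c : ι → ℝ)
    (w : ι → EuclideanSpace ℝ n) (u : EuclideanSpace ℝ n) :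
    (∑ j ∈ s, c j • Matrix.vecMulVec (fun i => w j i) (fun i => w j i)) *ᵥ (fun i => u i) =
      fun i => (∑ j ∈ s, (c j * ⟪w j, u⟫) • w j) i := by
  ext i
  simp [Matrix.sum_mulVec, Matrix.smul_mulVec, Matrix.vecMulVec_mulVec, Finset.sum_apply,
    EuclideanSpace.inner_eq_star_dotProduct, dotProduct_comm, mul_assoc]

-- `λ_i (t + a_{i-1} - τ_{i-1})` with the division inside `a_{i-1}` cleared.
def cumExposure (τ lam : ℕ → ℝ) (i : ℕ) (t : ℝ) : ℝ :=
  ∑ l ∈ Icc 1 (i - 1), (τ l - τ (l - 1)) * lam l + lam i * (t - τ (i - 1))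

def IsStressPiece (k : ℕ) (τ : ℕ → ℝ) (i : ℕ) (t : ℝ) : Prop :=
  1 ≤ i ∧ i ≤ k ∧ τ (i - 1) ≤ t ∧ (i < k → t < τ i)

section CumulativeExposure

variable {k : ℕ} {τ lam : ℕ → ℝ}

theorem mul_add_div_sub_eq_cumExposure {i : ℕ} (hi : lam i ≠ 0) (t : ℝ) :
    lam i * (t + (∑ l ∈ Icc 1 (i - 1), (τ l - τ (l - 1)) * lam l) / lam i - τ (i - 1)) =
      cumExposure τ lam i t := by
  rw [cumExposure]
  field_simp
  ring

theorem cumExposure_lt_cumExposure (hlam : ∀ i, 0 < lam i)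
    (hτ : ∀ i, i + 1 ≤ k - 1 → τ i < τ (i + 1)) {i i' : ℕ} {t t' : ℝ}
    (hit : IsStressPiece k τ i t) (hit' : IsStressPiece k τ i' t') (htt : t < t') :
    cumExposure τ lam i t < cumExposure τ lam i' t' := by
  obtain ⟨hi1, hik, hτt, htτ⟩ := hit
  obtain ⟨-, hik', hτt', htτ'⟩ := hit'
  have hτle : ∀ {m n}, m ≤ n → n ≤ k - 1 → τ m ≤ τ n := fun hmn hn =>
    (strictMonoOn_Iic_of_lt_succ fun m hm => hτ m (by omega)).monotoneOn
      (Set.mem_Iic.2 (hmn.trans hn)) (Set.mem_Iic.2 hn) hmn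
  rcases lt_trichotomy i i' with h | rfl | h
  · have hstep : ∑ l ∈ Icc 1 i, (τ l - τ (l - 1)) * lam l =
        ∑ l ∈ Icc 1 (i - 1), (τ l - τ (l - 1)) * lam l + (τ i - τ (i - 1)) * lam i := by
      conv_lhs => rw [← Nat.sub_add_cancel hi1]
      rw [sum_Icc_succ_top (by omega), Nat.sub_add_cancel hi1]
    have hmono : ∑ l ∈ Icc 1 i, (τ l - τ (l - 1)) * lam l ≤
        ∑ l ∈ Icc 1 (i' - 1), (τ l - τ (l - 1)) * lam l := by
      refine sum_le_sum_of_subset_of_nonneg (Icc_subset_Icc le_rfl (by omega)) fun l hl _ => ?_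
      rw [mem_Icc] at hl
      exact mul_nonneg (sub_nonneg.2 (hτle (by omega) (by omega))) (hlam l).le
    have hcur : lam i * (t - τ (i - 1)) < (τ i - τ (i - 1)) * lam i := by
      rw [mul_comm]
      exact mul_lt_mul_of_pos_right (by linarith [htτ (by omega)]) (hlam i)
    have hlast : 0 ≤ lam i' * (t' - τ (i' - 1)) := mul_nonneg (hlam i').le (by linarith)
    unfold cumExposure
    linarith
  · unfold cumExposure
    gcongr
    exact hlam i
  · linarith [htτ' (by omega), hτle (m := i') (n := i - 1) (by omega) (by omega)]

end CumulativeExposure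

theorem cellProb_pos_s12 {k L : ℕ} {τ lam tt GT piv : ℕ → ℝ} {I : ℕ → ℕ} (hlam : ∀ i, 0 < lam i)
    (hτ : ∀ i, i + 1 ≤ k - 1 → τ i < τ (i + 1)) (htt : ∀ j, j + 1 ≤ L → tt j < tt (j + 1))
    (hI : ∀ j ≤ L, IsStressPiece k τ (I j) (tt j))
    (hGT : ∀ j ≤ L, GT j = 1 - exp (-cumExposure τ lam (I j) (tt j)))
    (hpiv : ∀ j, 1 ≤ j → j ≤ L → piv j = GT j - GT (j - 1))
    (hpivend : piv (L + 1) = 1 - GT L) :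
    ∀ j ∈ Icc 1 (L + 1), 0 < piv j := by
  intro j hj
  rw [mem_Icc] at hj
  rcases hj.2.lt_or_eq with hjL | rfl
  · have hlt : tt (j - 1) < tt j := by
      simpa [Nat.sub_add_cancel hj.1] using htt (j - 1) (by omega)
    have := cumExposure_lt_cumExposure hlam hτ (hI (j - 1) (by omega)) (hI j (by omega)) hlt
    rw [hpiv j hj.1 (by omega), hGT j (by omega), hGT (j - 1) (by omega), sub_pos]
    gcongr
  · rw [hpivend, hGT L le_rfl, sub_sub_cancel]
    exact exp_pos _

theorem stmt12_general
    (k L : ℕ) (x τ tt : ℕ → ℝ) (I : ℕ → ℕ) (β : ℝ)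
    (lam a : EuclideanSpace ℝ (Fin 2) → ℕ → ℝ)
    (GT : EuclideanSpace ℝ (Fin 2) → ℕ → ℝ)
    (piv : EuclideanSpace ℝ (Fin 2) → ℕ → ℝ)
    (gradpi : EuclideanSpace ℝ (Fin 2) → ℕ → EuclideanSpace ℝ (Fin 2))
    (θ₀ : EuclideanSpace ℝ (Fin 2)) (J : Matrix (Fin 2) (Fin 2) ℝ)
    (n₀ : ℕ) (δ : ℝ) (θc : ℝ → EuclideanSpace ℝ (Fin 2))
    (hθ₀ : 0 < θ₀ 0)
    (hτmono : ∀ i, i + 1 ≤ k - 1 → τ i < τ (i + 1))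
    (htmono : ∀ j, j + 1 ≤ L → tt j < tt (j + 1))
    (hreg : ∀ j, j ≤ L →
      1 ≤ I j ∧ I j ≤ k ∧ τ (I j - 1) ≤ tt j ∧ (I j < k → tt j < τ (I j)))
    (hlam : ∀ θ : EuclideanSpace ℝ (Fin 2), ∀ i, lam θ i = θ 0 * Real.exp (θ 1 * x i))
    (ha : ∀ θ : EuclideanSpace ℝ (Fin 2), ∀ i,
      a θ i = (∑ l ∈ Finset.Icc 1 (i - 1), (τ l - τ (l - 1)) * lam θ l) / lam θ i)
    (hGT : ∀ θ : EuclideanSpace ℝ (Fin 2), ∀ j, j ≤ L →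
      GT θ j = 1 - Real.exp (-(lam θ (I j)) * (tt j + a θ (I j) - τ (I j - 1))))
    (hpiv : ∀ θ : EuclideanSpace ℝ (Fin 2), ∀ j, 1 ≤ j → j ≤ L →
      piv θ j = GT θ j - GT θ (j - 1))
    (hpivend : ∀ θ : EuclideanSpace ℝ (Fin 2), piv θ (L + 1) = 1 - GT θ L)
    (hgradpi : ∀ θ' : EuclideanSpace ℝ (Fin 2), 0 < θ' 0 → ∀ j, 1 ≤ j → j ≤ L + 1 →
      HasGradientAt (fun u : EuclideanSpace ℝ (Fin 2) => piv u j) (gradpi θ' j) θ')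
    (hC2 : ∀ j, 1 ≤ j → j ≤ L + 1 →
      ContDiffAt ℝ 2 (fun θ' : EuclideanSpace ℝ (Fin 2) => piv θ' j) θ₀)
    (hJ : J = ∑ j ∈ Finset.Icc 1 (L + 1),
      piv θ₀ j ^ (β - 1) •
        Matrix.vecMulVec (fun c => gradpi θ₀ j c) (fun c => gradpi θ₀ j c))
    (hJinv : IsUnit J.det)
    (hδ : 0 < δ)
    (hθc0 : θc 0 = θ₀)
    (hθcdiff : DifferentiableAt ℝ θc 0)
    (hθcin : ∀ ε ∈ Set.Ioo (-δ) δ, 0 < θc ε 0)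
    (hesteq : ∀ ε ∈ Set.Ioo (-δ) δ,
      ∑ j ∈ Finset.Icc 1 (L + 1),
        (piv (θc ε) j ^ (β - 1)
          * (piv (θc ε) j
              - ((1 - ε) * piv θ₀ j + ε * (if j = n₀ then (1 : ℝ) else 0))))
          • gradpi (θc ε) j = 0) :
    ∀ c : Fin 2,
      deriv θc 0 c =
        (J⁻¹.mulVec fun c' =>
          (∑ j ∈ Finset.Icc 1 (L + 1),
            (piv θ₀ j ^ (β - 1) * ((if j = n₀ then (1 : ℝ) else 0) - piv θ₀ j))
              • gradpi θ₀ j) c') c := by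
  have hlam₀ : ∀ i, 0 < lam θ₀ i := fun i => by rw [hlam]; positivity
  have hpos : ∀ j ∈ Icc 1 (L + 1), 0 < piv θ₀ j :=
    cellProb_pos_s12 hlam₀ hτmono htmono hreg
      (fun j hj => by rw [hGT θ₀ j hj, ha, neg_mul, mul_add_div_sub_eq_cumExposure (hlam₀ _).ne'])
      (hpiv θ₀) (hpivend θ₀)
  have hnear : ∀ᶠ ε in 𝓝 (0 : ℝ), ε ∈ Set.Ioo (-δ) δ := Ioo_mem_nhds (by linarith) hδ
  have hcont : ∀ j ∈ Icc 1 (L + 1), ContinuousAt (fun ε => gradpi (θc ε) j) 0 := by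
    intro j hj
    rw [mem_Icc] at hj
    refine ContDiffAt.continuousAt_of_eventually_hasGradientAt (f := (piv · j)) ?_
      hθcdiff.continuousAt ?_
    · rw [hθc0]
      exact (hC2 j hj.1 hj.2).of_le one_le_two
    · filter_upwards [hnear] with ε hε using hgradpi _ (hθcin ε hε) j hj.1 hj.2
  subst hθc0
  have hlin := linearized_estimatingEquation (β := β) (Icc 1 (L + 1))
    (fun j => if j = n₀ then 1 else 0) piv gradpi hθcdiff.hasDerivAt hpos
    (fun j hj => hgradpi _ hθ₀ j (mem_Icc.1 hj).1 (mem_Icc.1 hj).2) hcont (hnear.mono hesteq)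
  have hJu : J *ᵥ (fun c => deriv θc 0 c) = fun c => (∑ j ∈ Icc 1 (L + 1),
      (piv (θc 0) j ^ (β - 1) * ((if j = n₀ then 1 else 0) - piv (θc 0) j))
        • gradpi (θc 0) j) c := by
    rw [hJ, Matrix.sum_smul_vecMulVec_mulVec, hlin]
  intro c
  rw [← hJu, Matrix.mulVec_mulVec, Matrix.nonsing_inv_mul J hJinv, Matrix.one_mulVec]

/-- Influence function of the MDPDE (Result 5 of the paper): under the SSALT model with
exponential lifetimes, `θ₀` interior to `Θ = (0,∞) × ℝ` (as `EuclideanSpace ℝ (Fin 2)`) with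
`J_β(θ₀)` invertible, contamination in cell `n₀` with indicator `Δ` and contaminated mass
function `g_ε = (1−ε) π(θ₀) + ε Δ`: if the curve `ε ↦ θ(ε)` is differentiable at `0` with
`θ(0) = θ₀`, stays in `Θ`, satisfies the DPD estimating equation
`∑_j π_j(θ(ε))^{β−1} (π_j(θ(ε)) − g_{ε,j}) ∇π_j(θ(ε)) = 0` for all `ε ∈ (−δ, δ)`, and
`π` is twice continuously differentiable near `θ₀`, then
`θ′(0) = J_β(θ₀)⁻¹ W(θ₀)ᵀ D_{π(θ₀)}^{β−1} (Δ − π(θ₀))` (stated componentwise).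
Here `gradpi θ j` is the gradient `∇π_j(θ)` (the `j`-th row of `W(θ)`), and
`J_β(θ₀) = W(θ₀)ᵀ D^{β−1} W(θ₀) = ∑_j π_j(θ₀)^{β−1} ∇π_j ∇π_jᵀ`. -/
theorem stmt12
    (k L : ℕ) (x τ tt : ℕ → ℝ) (I : ℕ → ℕ) (β : ℝ)
    (lam a : EuclideanSpace ℝ (Fin 2) → ℕ → ℝ)
    (GT : EuclideanSpace ℝ (Fin 2) → ℕ → ℝ)
    (piv : EuclideanSpace ℝ (Fin 2) → ℕ → ℝ)
    (gradpi : EuclideanSpace ℝ (Fin 2) → ℕ → EuclideanSpace ℝ (Fin 2))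
    (θ₀ : EuclideanSpace ℝ (Fin 2)) (J : Matrix (Fin 2) (Fin 2) ℝ)
    (n₀ : ℕ) (δ : ℝ) (θc : ℝ → EuclideanSpace ℝ (Fin 2))
    (hk : 1 ≤ k) (hL : 1 ≤ L) (hβ : 0 < β) (hθ₀ : 0 < θ₀ 0)
    (hx : ∀ i, 1 ≤ i → i + 1 ≤ k → x i < x (i + 1))
    (hτ0 : τ 0 = 0)
    (hτmono : ∀ i, i + 1 ≤ k - 1 → τ i < τ (i + 1))
    (ht0 : tt 0 = 0)
    (htmono : ∀ j, j + 1 ≤ L → tt j < tt (j + 1))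
    (hchange : ∀ i, 1 ≤ i → i ≤ k - 1 → ∃ j, 1 ≤ j ∧ j ≤ L ∧ tt j = τ i)
    (hreg : ∀ j, j ≤ L →
      1 ≤ I j ∧ I j ≤ k ∧ τ (I j - 1) ≤ tt j ∧ (I j < k → tt j < τ (I j)))
    (hlam : ∀ θ : EuclideanSpace ℝ (Fin 2), ∀ i, lam θ i = θ 0 * Real.exp (θ 1 * x i))
    (ha : ∀ θ : EuclideanSpace ℝ (Fin 2), ∀ i,
      a θ i = (∑ l ∈ Finset.Icc 1 (i - 1), (τ l - τ (l - 1)) * lam θ l) / lam θ i)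
    (hGT : ∀ θ : EuclideanSpace ℝ (Fin 2), ∀ j, j ≤ L →
      GT θ j = 1 - Real.exp (-(lam θ (I j)) * (tt j + a θ (I j) - τ (I j - 1))))
    (hpiv : ∀ θ : EuclideanSpace ℝ (Fin 2), ∀ j, 1 ≤ j → j ≤ L →
      piv θ j = GT θ j - GT θ (j - 1))
    (hpivend : ∀ θ : EuclideanSpace ℝ (Fin 2), piv θ (L + 1) = 1 - GT θ L)
    (hgradpi : ∀ θ' : EuclideanSpace ℝ (Fin 2), 0 < θ' 0 → ∀ j, 1 ≤ j → j ≤ L + 1 →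
      HasGradientAt (fun u : EuclideanSpace ℝ (Fin 2) => piv u j) (gradpi θ' j) θ')
    (hC2 : ∀ j, 1 ≤ j → j ≤ L + 1 →
      ContDiffAt ℝ 2 (fun θ' : EuclideanSpace ℝ (Fin 2) => piv θ' j) θ₀)
    (hJ : J = ∑ j ∈ Finset.Icc 1 (L + 1),
      piv θ₀ j ^ (β - 1) •
        Matrix.vecMulVec (fun c => gradpi θ₀ j c) (fun c => gradpi θ₀ j c))
    (hJinv : IsUnit J.det)
    (hn₀ : 1 ≤ n₀ ∧ n₀ ≤ L + 1)
    (hδ : 0 < δ)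
    (hθc0 : θc 0 = θ₀)
    (hθcdiff : DifferentiableAt ℝ θc 0)
    (hθcin : ∀ ε ∈ Set.Ioo (-δ) δ, 0 < θc ε 0)
    (hesteq : ∀ ε ∈ Set.Ioo (-δ) δ,
      ∑ j ∈ Finset.Icc 1 (L + 1),
        (piv (θc ε) j ^ (β - 1)
          * (piv (θc ε) j
              - ((1 - ε) * piv θ₀ j + ε * (if j = n₀ then (1 : ℝ) else 0))))
          • gradpi (θc ε) j = 0) :
    ∀ c : Fin 2,
      deriv θc 0 c =
        (J⁻¹.mulVec fun c' =>
          (∑ j ∈ Finset.Icc 1 (L + 1),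
            (piv θ₀ j ^ (β - 1) * ((if j = n₀ then (1 : ℝ) else 0) - piv θ₀ j))
              • gradpi θ₀ j) c') c :=
  stmt12_general k L x τ tt I β lam a GT piv gradpi θ₀ J n₀ δ θc hθ₀ hτmono htmono hreg hlam ha hGT
    hpiv hpivend hgradpi hC2 hJ hJinv hδ hθc0 hθcdiff hθcin hesteq
end EstimatingEquation
end

section
/- Consistency of the Z-type test under a fixed alternative (Result 14): let Σ : Θ → ℝ^{2×2} be a function continuous at θ* with Σ(θ*) symmetric positive semidefinite (in the application Σ(θ) = J_β(θ)⁻¹ K_β(θ) J_β(θ)⁻¹), let m ∈ ℝ², d ∈ ℝ with mᵀ θ* ≠ d and mᵀ Σ(θ*) m > 0, and suppose θ̂_N are random vectors such that (i) for every v ∈ ℝ², vᵀ √N (θ̂_N − θ*) converges in distribution to the centered Gaussian law with variance vᵀ Σ(θ*) v, and (ii) θ̂_N → θ* in probability. Then for every c > 0, the power P(|Z_N| > c) → 1 as N → ∞, where Z_N = √N (mᵀ Σ(θ̂_N) m)^{−1/2} (mᵀ θ̂_N − d); i.e., the Z-type test with critical region {|Z_N| > z_{α/2}} is consistent. -/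
open Real Filter MeasureTheory ProbabilityTheory

/-- Consistency of the Z-type test under a fixed alternative: if `mᵀ θ* ≠ d`, `Σ(·)` is
continuous at `θ*` with `Σ(θ*)` symmetric positive semidefinite and `mᵀ Σ(θ*) m > 0`, the
estimators `θ̂_N` satisfy `vᵀ √N (θ̂_N − θ*) →ᵈ N(0, vᵀ Σ(θ*) v)` for every `v` and
`θ̂_N → θ*` in probability, then for every critical value `c > 0` the power
`P(|Z_N| > c) → 1`, where `Z_N = √N (mᵀ Σ(θ̂_N) m)^{−1/2} (mᵀ θ̂_N − d)`. -/
theorem stmt18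
    {Ω : Type*} [MeasurableSpace Ω] (P : Measure Ω) [IsProbabilityMeasure P]
    (θstar : Fin 2 → ℝ)
    (Sig : (Fin 2 → ℝ) → Matrix (Fin 2) (Fin 2) ℝ)
    (hSigcont : ContinuousAt Sig θstar)
    (hsymm : (Sig θstar).IsSymm) (hpsd : (Sig θstar).PosSemidef)
    (m : Fin 2 → ℝ) (d : ℝ)
    (halt : ∑ c, m c * θstar c ≠ d)
    (hpos : 0 < ∑ c, ∑ c', m c * Sig θstar c c' * m c')
    (θhat : ℕ → Ω → Fin 2 → ℝ) (hmeas : ∀ N, Measurable (θhat N))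
    (hconv : ∀ v : Fin 2 → ℝ, ∀ f : ℝ → ℝ, Continuous f → (∃ C, ∀ y, |f y| ≤ C) →
      Tendsto (fun N : ℕ => ∫ ω, f (Real.sqrt N * ∑ c, v c * (θhat N ω c - θstar c)) ∂P)
        atTop
        (nhds (∫ y, f y ∂gaussianReal 0
          (∑ c, ∑ c', v c * Sig θstar c c' * v c').toNNReal)))
    (hprob : ∀ ε : ℝ, 0 < ε →
      Tendsto (fun N : ℕ => P {ω | ε < dist (θhat N ω) θstar}) atTop (nhds 0)) :
    ∀ c : ℝ, 0 < c →
      Tendsto (fun N : ℕ => P {ω | c < |Real.sqrt N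
          * (Real.sqrt (∑ i, ∑ i', m i * Sig (θhat N ω) i i' * m i'))⁻¹
          * (∑ i, m i * θhat N ω i - d)|})
        atTop (nhds 1) := by
  intro c hc
  -- continuity of the entries of Sig at θstar
  have hentry : ∀ i i' : Fin 2, ContinuousAt (fun θ => Sig θ i i') θstar := by
    intro i i'
    have hM : Continuous fun M : Matrix (Fin 2) (Fin 2) ℝ => M i i' :=
      (continuous_apply i').comp (continuous_apply i)
    exact hM.continuousAt.comp hSigcont
  -- the quadratic form and the "standardized deviation" function
  have hQ : ContinuousAt (fun θ => ∑ i, ∑ i', m i * Sig θ i i' * m i') θstar := by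
    simp only [Fin.sum_univ_two]
    exact (((continuousAt_const.mul (hentry 0 0)).mul continuousAt_const).add
      ((continuousAt_const.mul (hentry 0 1)).mul continuousAt_const)).add
      ((((continuousAt_const.mul (hentry 1 0)).mul continuousAt_const)).add
      ((continuousAt_const.mul (hentry 1 1)).mul continuousAt_const))
  have hS : Continuous (fun θ : Fin 2 → ℝ => |∑ i, m i * θ i - d|) := by
    simp only [Fin.sum_univ_two]
    exact continuous_abs.comp
      (((continuous_const.mul (continuous_apply 0)).add
        (continuous_const.mul (continuous_apply 1))).sub continuous_const)
  set h : (Fin 2 → ℝ) → ℝ :=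
    fun θ => (Real.sqrt (∑ i, ∑ i', m i * Sig θ i i' * m i'))⁻¹ * |∑ i, m i * θ i - d|
    with hhdef
  have hsqrtpos : 0 < Real.sqrt (∑ i, ∑ i', m i * Sig θstar i i' * m i') :=
    Real.sqrt_pos.2 hpos
  have hh : ContinuousAt h θstar := by
    exact ((Real.continuous_sqrt.continuousAt.comp hQ).inv₀ (ne_of_gt hsqrtpos)).mul
      hS.continuousAt
  have hapos : 0 < h θstar / 2 := by
    have : 0 < h θstar :=
      mul_pos (inv_pos.2 hsqrtpos) (abs_pos.2 (sub_ne_zero.2 halt))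
    linarith
  set a : ℝ := h θstar / 2 with hadef
  -- a neighborhood on which h > a
  have hnhds : {θ | a < h θ} ∈ nhds θstar := hh (lt_mem_nhds (by simp [hadef]; linarith))
  obtain ⟨ε, hε, hball⟩ := Metric.mem_nhds_iff.1 hnhds
  have hpoint : ∀ θ : Fin 2 → ℝ, dist θ θstar < ε →
      a < (Real.sqrt (∑ i, ∑ i', m i * Sig θ i i' * m i'))⁻¹ * |∑ i, m i * θ i - d| :=
    fun θ hθ => hball (Metric.mem_ball.2 hθ)
  -- eventually √N exceeds c/a
  have hNs : ∀ᶠ N : ℕ in atTop, c / a < Real.sqrt N := by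
    obtain ⟨N0, hN0⟩ := exists_nat_gt ((c / a) ^ 2)
    filter_upwards [eventually_ge_atTop N0] with N hN
    exact (Real.lt_sqrt (div_nonneg hc.le hapos.le)).2
      (lt_of_lt_of_le hN0 (Nat.cast_le.2 hN))
  -- key lower bound on the power
  have key : ∀ᶠ N : ℕ in atTop,
      (1 : ENNReal) - P {ω | ε / 2 < dist (θhat N ω) θstar} ≤
        P {ω | c < |Real.sqrt N
          * (Real.sqrt (∑ i, ∑ i', m i * Sig (θhat N ω) i i' * m i'))⁻¹
          * (∑ i, m i * θhat N ω i - d)|} := by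
    filter_upwards [hNs] with N hN
    have hsqN : 0 < Real.sqrt N := lt_of_le_of_lt (div_nonneg hc.le hapos.le) hN
    have hsub : {ω | ¬ c < |Real.sqrt N
          * (Real.sqrt (∑ i, ∑ i', m i * Sig (θhat N ω) i i' * m i'))⁻¹
          * (∑ i, m i * θhat N ω i - d)|} ⊆
        {ω | ε / 2 < dist (θhat N ω) θstar} := by
      intro ω hω
      by_contra hdist
      apply hω
      have hd : dist (θhat N ω) θstar < ε := by
        simp only [Set.mem_setOf_eq, not_lt] at hdist
        linarith
      have h1 := hpoint (θhat N ω) hd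
      have habs : |Real.sqrt N
          * (Real.sqrt (∑ i, ∑ i', m i * Sig (θhat N ω) i i' * m i'))⁻¹
          * (∑ i, m i * θhat N ω i - d)|
          = Real.sqrt N *
            ((Real.sqrt (∑ i, ∑ i', m i * Sig (θhat N ω) i i' * m i'))⁻¹
              * |∑ i, m i * θhat N ω i - d|) := by
        rw [abs_mul, abs_mul, abs_of_nonneg (Real.sqrt_nonneg _),
          abs_of_nonneg (inv_nonneg.2 (Real.sqrt_nonneg _)), mul_assoc]
      have h2 : c < Real.sqrt N * a := (div_lt_iff₀ hapos).1 hN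
      have h3 : Real.sqrt N * a < Real.sqrt N *
          ((Real.sqrt (∑ i, ∑ i', m i * Sig (θhat N ω) i i' * m i'))⁻¹
            * |∑ i, m i * θhat N ω i - d|) :=
        mul_lt_mul_of_pos_left h1 hsqN
      show c < _
      rw [habs]
      linarith
    have hineq : (1 : ENNReal) ≤
        P {ω | c < |Real.sqrt N
          * (Real.sqrt (∑ i, ∑ i', m i * Sig (θhat N ω) i i' * m i'))⁻¹
          * (∑ i, m i * θhat N ω i - d)|}
        + P {ω | ε / 2 < dist (θhat N ω) θstar} := by
      have hcover : (Set.univ : Set Ω) ⊆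
          {ω | c < |Real.sqrt N
            * (Real.sqrt (∑ i, ∑ i', m i * Sig (θhat N ω) i i' * m i'))⁻¹
            * (∑ i, m i * θhat N ω i - d)|}
          ∪ {ω | ε / 2 < dist (θhat N ω) θstar} := by
        intro ω _
        by_cases hcase : c < |Real.sqrt N
            * (Real.sqrt (∑ i, ∑ i', m i * Sig (θhat N ω) i i' * m i'))⁻¹
            * (∑ i, m i * θhat N ω i - d)|
        · exact Or.inl hcase
        · exact Or.inr (hsub hcase)
      calc (1 : ENNReal) = P Set.univ := (measure_univ).symm
        _ ≤ P (_ ∪ _) := measure_mono hcover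
        _ ≤ _ + _ := measure_union_le _ _
    exact tsub_le_iff_right.2 hineq
  -- squeeze
  have hlow : Tendsto (fun N : ℕ => (1 : ENNReal) - P {ω | ε / 2 < dist (θhat N ω) θstar})
      atTop (nhds 1) := by
    have := ENNReal.Tendsto.sub (tendsto_const_nhds (x := (1 : ENNReal)))
      (hprob (ε / 2) (by linarith)) (Or.inl ENNReal.one_ne_top)
    simpa using this
  exact tendsto_of_tendsto_of_tendsto_of_le_of_le' hlow tendsto_const_nhds key
    (Eventually.of_forall fun N => prob_le_one)
end
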